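/- arXiv:1801.05372 — 3 statements merged into one kernel-verified Lean document; each statement's English description precedes it below -/
import Mathlib

section
/- Let rnn be a linear-activation scalar recurrent neural network. If rnn is permutation-invariant on input sequences of every length (i.e., for every n and every permutation σ of {1,…,n}, rnn(x_1,…,x_n) = rnn(x_{σ(1)},…,x_{σ(n)}) for all inputs), then either rnn is constant in the inputs at each fixed length, or for every n ≥ 1 and all inputs, rnn(x_1,…,x_n) = c + U·h_0 + n·U·b + U·W·(x_1 + ⋯ + x_n). -/
/-- Hidden state of a scalar linear RNN after consuming the inputs `xs`. -/
def rnnHidden (b H W h0 : ℝ) (xs : List ℝ) : ℝ :=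
  xs.foldl (fun h x => b + H * h + W * x) h0

/-- Output of a scalar linear RNN on the input sequence `xs`. -/
def rnnOut (b c H W U h0 : ℝ) (xs : List ℝ) : ℝ :=
  c + U * rnnHidden b H W h0 xs

lemma rnnHidden_cons (b H W h0 x : ℝ) (xs : List ℝ) :
    rnnHidden b H W h0 (x :: xs) = rnnHidden b H W (b + H * h0 + W * x) xs := rfl

lemma rnnHidden_diff (b H W : ℝ) (xs : List ℝ) : ∀ h1 h2 : ℝ,
    rnnHidden b H W h1 xs - rnnHidden b H W h2 xs = H ^ xs.length * (h1 - h2) := by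
  induction xs with
  | nil => intro h1 h2; simp [rnnHidden]
  | cons x xs ih =>
    intro h1 h2
    rw [rnnHidden_cons, rnnHidden_cons, ih]
    simp [pow_succ]
    ring

lemma rnnHidden_one (b W : ℝ) (xs : List ℝ) : ∀ h0 : ℝ,
    rnnHidden b 1 W h0 xs = h0 + (xs.length : ℝ) * b + W * xs.sum := by
  induction xs with
  | nil => intro h0; simp [rnnHidden]
  | cons x xs ih =>
    intro h0
    rw [rnnHidden_cons, ih]
    simp [List.sum_cons]
    ring

lemma rnnHidden_W0 (b H : ℝ) (xs : List ℝ) : ∀ h0 : ℝ,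
    rnnHidden b H 0 h0 xs = rnnHidden b H 0 h0 (List.replicate xs.length 0) := by
  induction xs with
  | nil => intro h0; simp
  | cons x xs ih =>
    intro h0
    rw [rnnHidden_cons, List.length_cons, List.replicate_succ, rnnHidden_cons, ih]
    ring_nf

theorem stmt_4 (b c H W U h0 : ℝ)
    (hperm : ∀ xs ys : List ℝ, xs.Perm ys → rnnOut b c H W U h0 xs = rnnOut b c H W U h0 ys) :
    (∀ n : ℕ, ∃ v : ℝ, ∀ xs : List ℝ, xs.length = n → rnnOut b c H W U h0 xs = v) ∨
    (∀ xs : List ℝ, 1 ≤ xs.length →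
      rnnOut b c H W U h0 xs
        = c + U * h0 + (xs.length : ℝ) * U * b + U * W * xs.sum) := by
  have hswap := hperm [0, 1] [1, 0] (List.Perm.swap 1 0 [])
  simp only [rnnOut, rnnHidden, List.foldl] at hswap
  -- hswap gives U*W*(H-1) = 0
  have key : U * W * (H - 1) = 0 := by nlinarith [hswap]
  by_cases hUW : U * W = 0
  · left
    -- output only depends on length
    have main : ∀ (xs : List ℝ) (h : ℝ),
        U * rnnHidden b H W h xs = U * rnnHidden b H 0 h xs := by
      intro xs
      induction xs with
      | nil => intro h; rfl
      | cons x xs ih =>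
        intro h
        rw [rnnHidden_cons, rnnHidden_cons]
        have hd := rnnHidden_diff b H W xs (b + H * h + W * x) (b + H * h + 0 * x)
        have : rnnHidden b H W (b + H * h + W * x) xs
            = rnnHidden b H W (b + H * h + 0 * x) xs + H ^ xs.length * (W * x) := by
          linarith [hd]
        rw [this, mul_add, ih]
        have : U * (H ^ xs.length * (W * x)) = (U * W) * (H ^ xs.length * x) := by ring
        rw [this, hUW]
        ring
    intro n
    refine ⟨c + U * rnnHidden b H 0 h0 (List.replicate n 0), fun xs hlen => ?_⟩
    rw [rnnOut, main, rnnHidden_W0, hlen]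
  · right
    have hH : H = 1 := by
      have := mul_eq_zero.mp key
      rcases this with h | h
      · exact absurd h hUW
      · linarith
    subst hH
    intro xs _
    rw [rnnOut, rnnHidden_one]
    ring
end

section
/- Let rnn be a linear-activation scalar RNN with parameters b, c, H, W, U and initial state h_0, and suppose U·W ≠ 0 and H ≠ 1. Then there exist real numbers x_0, x_1 such that the output of rnn on (x_0, x_1) differs from its output on (x_1, x_0); in particular, rnn does not define a set function on two-element multisets. -/
theorem stmt_6 (b c H W U h0 : ℝ) (hUW : U * W ≠ 0) (hH : H ≠ 1) :
    ∃ x0 x1 : ℝ, rnnOut b c H W U h0 [x0, x1] ≠ rnnOut b c H W U h0 [x1, x0] := by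
  refine ⟨0, 1, fun heq => ?_⟩
  simp only [rnnOut, rnnHidden, List.foldl] at heq
  have : U * W * (H - 1) = 0 := by ring_nf; ring_nf at heq; linarith
  rcases mul_eq_zero.mp this with h | h
  · exact hUW h
  · exact hH (by linarith)
end

section
/- Deciding whether there exists a joining path achieving zero loss in the feature learning problem is NP-hard: the Hamiltonian cycle problem on an undirected graph G with n vertices reduces in polynomial time to it. Concretely: given an undirected graph G on vertices v_1, …, v_n, construct a database with one single-row table T_i per vertex, a shared foreign key k_{ij} for each pair i < j whose values in T_i and T_j agree iff (v_i, v_j) is an edge of G, main table T_1 carrying label n, transformation f mapping a nonempty join result along path p to the length of the longest simple cycle that is a subgraph of p (and empty join results to 0), and g the identity. Then there exists a path p starting at T_1 with g(f(J_p)) = n if and only if G contains a Hamiltonian cycle. -/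
/-! A cycle of `⊤` on `n` vertices has length at most `n`, with equality exactly for Hamiltonian
cycles, and being a Hamiltonian cycle only depends on the vertex sequence, not on the ambient
graph. So a walk along edges of `G` contains a cycle of length `n` iff `G` has a Hamiltonian
cycle; conversely a Hamiltonian cycle of `G`, rotated to start at vertex `0`, is itself the
required walk. -/

open SimpleGraph

/-- The lengths of simple cycles that are subgraphs of (i.e. all of whose edges occur among the
edges of) the walk `p` in the complete graph on `Fin n`. -/
def subCycleLengths {n : ℕ} {u v : Fin n}
    (p : (⊤ : SimpleGraph (Fin n)).Walk u v) : Set ℕ :=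
  {k | ∃ (w : Fin n) (c : (⊤ : SimpleGraph (Fin n)).Walk w w),
        c.IsCycle ∧ (∀ e ∈ c.edges, e ∈ p.edges) ∧ c.length = k}

namespace SimpleGraph.Walk

variable {V : Type*} {G H : SimpleGraph V}

lemma IsCycle.length_le_card [Fintype V] {u : V} {c : G.Walk u u} (hc : c.IsCycle) :
    c.length ≤ Fintype.card V := by
  rw [← length_tail_add_one hc.not_nil]
  exact hc.isPath_tail.length_lt

lemma IsHamiltonianCycle.transfer [DecidableEq V] {u : V} {c : G.Walk u u}
    (hc : c.IsHamiltonianCycle) (hH : ∀ e ∈ c.edges, e ∈ H.edgeSet) :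
    (c.transfer H hH).IsHamiltonianCycle := by
  rw [isHamiltonianCycle_iff_isCycle_and_support_count_tail_eq_one] at hc ⊢
  exact ⟨hc.1.transfer hH, by simpa only [support_transfer] using hc.2⟩

end SimpleGraph.Walk

lemma card_mem_upperBounds_subCycleLengths {n : ℕ} {u v : Fin n}
    (p : (⊤ : SimpleGraph (Fin n)).Walk u v) : n ∈ upperBounds (subCycleLengths p) := by
  rintro k ⟨w, c, hc, -, rfl⟩
  simpa using hc.length_le_card

lemma length_mem_subCycleLengths_self {n : ℕ} {u : Fin n}
    {c : (⊤ : SimpleGraph (Fin n)).Walk u u} (hc : c.IsCycle) : c.length ∈ subCycleLengths c :=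
  ⟨u, c, hc, fun _ he => he, rfl⟩

/-- The reduction from Hamiltonian cycle: there is a joining path `p` starting at the main
table `T₁` (vertex `0`) whose join result is nonempty (all its edges lie in `G`) and whose
longest simple subcycle has length `n` (so `g (f (J_p)) = n`), iff `G` has a Hamiltonian
cycle. -/
theorem stmt_8 (n : ℕ) [NeZero n] (G : SimpleGraph (Fin n)) :
    (∃ (v : Fin n) (p : (⊤ : SimpleGraph (Fin n)).Walk 0 v),
        (∀ e ∈ p.edges, e ∈ G.edgeSet) ∧ IsGreatest (subCycleLengths p) n) ↔
      ∃ (w : Fin n) (c : G.Walk w w), c.IsHamiltonianCycle := by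
  constructor
  · rintro ⟨v, p, hpG, ⟨w, c, hc, hcp, hlen⟩, -⟩
    have hcG : ∀ e ∈ c.edges, e ∈ G.edgeSet := fun e he => hpG e (hcp e he)
    have hcHam : c.IsHamiltonianCycle :=
      Walk.isHamiltonianCycle_iff_isCycle_and_length_eq.mpr ⟨hc, by simpa using hlen⟩
    exact ⟨w, c.transfer G hcG, hcHam.transfer hcG⟩
  · rintro ⟨w, c, hc⟩
    set c₀ := c.rotate 0 (hc.mem_support 0)
    have hc₀ : c₀.IsHamiltonianCycle := hc.rotate _
    have hc₀top : ∀ e ∈ c₀.edges, e ∈ (⊤ : SimpleGraph (Fin n)).edgeSet :=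
      fun _ he => edgeSet_mono le_top (c₀.edges_subset_edgeSet he)
    have hpHam := hc₀.transfer hc₀top
    refine ⟨0, c₀.transfer ⊤ hc₀top, ?_, ?_, card_mem_upperBounds_subCycleLengths _⟩
    · simpa only [Walk.edges_transfer] using c₀.edges_subset_edgeSet
    · simpa [hpHam.length_eq] using length_mem_subCycleLengths_self hpHam.isCycle
end
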